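/- Let H₂⁺(t) = y_b + [−λr/(2λr y_b − λ − μ) + (1/(s₂ − y_b) + λr/(2λr y_b − λ − μ)) e^{−(2 y_b λ r − λ − μ)t}]^{-1}, where y_b = (λ+μ+√((λ+μ)² − 4λμr))/(2λr), λ, μ > 0, 0 < r < 1, s₂ ∈ (0,1). Then on an interval around 0 where the bracket is nonzero, H₂⁺ solves d/dt H₂⁺ = λ r (H₂⁺)² − (λ+μ) H₂⁺ + μ with H₂⁺(0) = s₂. -/

import Mathlib

/-!
If `y` is a root of `a y² - b y + m`, the substitution `H = y + 1 / B` turns the Riccati equation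
`H' = a H² - b H + m` into the linear equation `B' = -(2 a y - b) B - a`, whose solutions are
`B t = -a / c + A e^{-c t}` with `c = 2 a y - b`. Taking `y = y_b`, the larger root, gives
`c = √((λ+μ)² - 4λμr) > 0`, and `A` is chosen so that `B 0 = 1 / (s₂ - y_b)`.
-/

open Real

namespace Riccati

theorem hasDerivAt_affine_exp (k c A t : ℝ) (hc : c ≠ 0) :
    HasDerivAt (fun t => -k / c + A * exp (-c * t)) (-c * (-k / c + A * exp (-c * t)) - k) t := by
  have h := (((hasDerivAt_id t).const_mul (-c)).exp.const_mul A).const_add (-k / c)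
  exact h.congr_deriv (by simp only [id]; field_simp; ring)

theorem hasDerivAt_add_inv_of_linear {B : ℝ → ℝ} {a b m y c t : ℝ}
    (hB : HasDerivAt B (-c * B t - a) t) (hBt : B t ≠ 0)
    (hy : a * y ^ 2 - b * y + m = 0) (hc : 2 * a * y - b = c) :
    HasDerivAt (fun t => y + (B t)⁻¹)
      (a * (y + (B t)⁻¹) ^ 2 - b * (y + (B t)⁻¹) + m) t := by
  refine ((hB.inv hBt).const_add y).congr_deriv ?_
  field_simp
  linear_combination -B t ^ 2 * hy - B t * hc

theorem quadratic_root_of_sq_eq_discrim {a b m D y : ℝ} (ha : a ≠ 0)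
    (hD : D ^ 2 = b ^ 2 - 4 * a * m) (hy : y = (b + D) / (2 * a)) :
    a * y ^ 2 - b * y + m = 0 ∧ 2 * a * y - b = D := by
  subst hy
  constructor
  · field_simp
    linear_combination hD
  · field_simp
    ring

end Riccati

theorem stmt9_general (lam mu r s2 : ℝ) (hlam : 0 < lam) (hmu : 0 < mu)
    (hr : r ∈ Set.Ioo (0 : ℝ) 1) :
    let yb : ℝ := (lam + mu + Real.sqrt ((lam + mu) ^ 2 - 4 * lam * mu * r)) / (2 * lam * r)
    let B : ℝ → ℝ := fun t =>
      -(lam * r) / (2 * lam * r * yb - lam - mu) +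
        (1 / (s2 - yb) + lam * r / (2 * lam * r * yb - lam - mu)) *
          Real.exp (-(2 * yb * lam * r - lam - mu) * t)
    let H : ℝ → ℝ := fun t => yb + (B t)⁻¹
    H 0 = s2 ∧ ∀ t : ℝ, B t ≠ 0 →
      HasDerivAt H (lam * r * (H t) ^ 2 - (lam + mu) * H t + mu) t := by
  obtain ⟨hr0, hr1⟩ := hr
  intro yb B H
  have hdisc : 0 < (lam + mu) ^ 2 - 4 * lam * mu * r := by
    nlinarith [sq_nonneg (lam - mu), mul_pos (mul_pos hlam hmu) (sub_pos.2 hr1)]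
  obtain ⟨hroot, hc⟩ := Riccati.quadratic_root_of_sq_eq_discrim (a := lam * r) (b := lam + mu)
    (m := mu) (y := yb) (by positivity) (by rw [sq_sqrt hdisc.le]; ring) (by rw [← mul_assoc])
  set c := 2 * lam * r * yb - lam - mu with hc_def
  have hc_sqrt : c = √((lam + mu) ^ 2 - 4 * lam * mu * r) := by rw [hc_def, ← hc]; ring
  have hc_pos : 0 < c := hc_sqrt ▸ sqrt_pos.2 hdisc
  have hexp : 2 * yb * lam * r - lam - mu = c := by ring
  refine ⟨?_, fun t hBt => ?_⟩
  · show yb + (-(lam * r) / c + (1 / (s2 - yb) + lam * r / c) * exp (-_ * 0))⁻¹ = s2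
    rw [mul_zero, exp_zero, mul_one, neg_div, neg_add_cancel_comm_assoc, one_div, inv_inv,
      add_sub_cancel]
  · have hB : HasDerivAt B (-c * B t - lam * r) t := by
      simpa only [B, hexp] using
        Riccati.hasDerivAt_affine_exp (lam * r) c (1 / (s2 - yb) + lam * r / c) t hc_pos.ne'
    exact Riccati.hasDerivAt_add_inv_of_linear hB hBt hroot (hc.trans hc_sqrt.symm)

/-- The closed form `H₂⁺` of Theorem 1 solves the Riccati backward equation
`d/dt H₂⁺ = λ r (H₂⁺)² − (λ+μ) H₂⁺ + μ` with `H₂⁺(0) = s₂`, on an interval where the bracket is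
nonzero. -/
theorem stmt9 (lam mu r s2 : ℝ) (hlam : 0 < lam) (hmu : 0 < mu)
    (hr : r ∈ Set.Ioo (0 : ℝ) 1) (hs2 : s2 ∈ Set.Ioo (0 : ℝ) 1) :
    let yb : ℝ := (lam + mu + Real.sqrt ((lam + mu) ^ 2 - 4 * lam * mu * r)) / (2 * lam * r)
    let B : ℝ → ℝ := fun t =>
      -(lam * r) / (2 * lam * r * yb - lam - mu) +
        (1 / (s2 - yb) + lam * r / (2 * lam * r * yb - lam - mu)) *
          Real.exp (-(2 * yb * lam * r - lam - mu) * t)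
    let H : ℝ → ℝ := fun t => yb + (B t)⁻¹
    H 0 = s2 ∧ ∀ t : ℝ, B t ≠ 0 →
      HasDerivAt H (lam * r * (H t) ^ 2 - (lam + mu) * H t + mu) t :=
  stmt9_general lam mu r s2 hlam hmu hr
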